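/- arXiv:2211.13682 — 2 statements merged into one kernel-verified Lean document; each statement's English description precedes it below -/
import Mathlib

section
/- Under the hypotheses of the preceding statement (the system of Proposition 2, with ψ ≡ 0), define the total storage function S(t) = H₁(t) + T(t) + H₂(t), where H₁(t) = ½ẋ₁(t)ᵀM(t)ẋ₁(t), T(t) = ½x_t(t)², H₂(t) = ½v₂(t)ᵀv₂(t). Then for every t, S is differentiable at t and Ṡ(t) = ẋ₁(t)ᵀF₁(t) − (1 − φ(t))·P_D(t) − (1 − φ(t))·P_N(t) + (1 − γ(t))·P_M(t) + v₂(t)ᵀF_null(t), where P_D(t) = ẋ₁(t)ᵀD(t)ẋ₁(t), P_N(t) = v₂(t)ᵀD_N(t)v₂(t), and P_M(t) = ½ẋ₁(t)ᵀṀ(t)ẋ₁(t). -/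
open Matrix

/-!
Each storage term is differentiated by the product rule. Symmetry of `M` merges the two terms
`ẍ₁ᵀMẋ₁` and `ẋ₁ᵀMẍ₁` of `d/dt (ẋ₁ᵀMẋ₁)` into `2 ẋ₁ᵀMẍ₁`, and the admittance dynamics turn
`ẋ₁ᵀMẍ₁` into `ẋ₁ᵀF₁ − P_D`; likewise the null-space dynamics give `v₂ᵀv̇₂ = −P_N + v₂ᵀF_null`,
and the tank dynamics give `x_t ẋ_t` directly. Adding the three contributions yields the identity.
-/

section DotProductDeriv

variable {ι κ : Type*} [Fintype ι] {t : ℝ}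

theorem HasDerivAt.dotProduct {f g : ℝ → ι → ℝ} {f' g' : ι → ℝ}
    (hf : HasDerivAt f f' t) (hg : HasDerivAt g g' t) :
    HasDerivAt (fun s => f s ⬝ᵥ g s) (f' ⬝ᵥ g t + f t ⬝ᵥ g') t := by
  have h : HasDerivAt (fun s => ∑ i, f s i * g s i) (∑ i, (f' i * g t i + f t i * g' i)) t :=
    HasDerivAt.fun_sum fun i _ => (hasDerivAt_pi.1 hf i).mul (hasDerivAt_pi.1 hg i)
  exact h.congr_deriv Finset.sum_add_distrib

-- `Matrix` carries no global norm, so the derivative of a matrix path is stated entrywise.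
theorem HasDerivAt.mulVec {A : ℝ → Matrix κ ι ℝ} {A' : Matrix κ ι ℝ} {v : ℝ → ι → ℝ}
    {v' : ι → ℝ} (hA : ∀ i j, HasDerivAt (fun s => A s i j) (A' i j) t)
    (hv : HasDerivAt v v' t) :
    HasDerivAt (fun s => A s *ᵥ v s) (A' *ᵥ v t + A t *ᵥ v') t :=
  hasDerivAt_pi.2 fun i => (hasDerivAt_pi.2 (hA i)).dotProduct hv

theorem Matrix.IsSymm.dotProduct_mulVec_comm {A : Matrix ι ι ℝ} (hA : A.IsSymm) (v w : ι → ℝ) :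
    w ⬝ᵥ A *ᵥ v = v ⬝ᵥ A *ᵥ w := by
  rw [dotProduct_mulVec, dotProduct_comm, ← mulVec_transpose, hA.eq]

theorem HasDerivAt.dotProduct_mulVec_self_of_isSymm {A : ℝ → Matrix ι ι ℝ} {A' : Matrix ι ι ℝ}
    {v : ℝ → ι → ℝ} {v' : ι → ℝ} (hA : ∀ i j, HasDerivAt (fun s => A s i j) (A' i j) t)
    (hv : HasDerivAt v v' t) (hsymm : (A t).IsSymm) :
    HasDerivAt (fun s => v s ⬝ᵥ A s *ᵥ v s) (v t ⬝ᵥ A' *ᵥ v t + 2 * (v t ⬝ᵥ A t *ᵥ v')) t := by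
  refine (hv.dotProduct (HasDerivAt.mulVec hA hv)).congr_deriv ?_
  rw [hsymm.dotProduct_mulVec_comm, dotProduct_add]
  ring

end DotProductDeriv

theorem storage_function_derivative_general
    (m₁ m₂ : ℕ)
    (x1' x1'' F₁ : ℝ → Fin m₁ → ℝ)
    (v₂ v₂' Fnull : ℝ → Fin m₂ → ℝ)
    (xt xt' : ℝ → ℝ)
    (M M' D : ℝ → Matrix (Fin m₁) (Fin m₁) ℝ)
    (DN : ℝ → Matrix (Fin m₂) (Fin m₂) ℝ)
    (φ γ : ℝ → ℝ)
    (hx1 : ∀ t, HasDerivAt x1' (x1'' t) t)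
    (hv2 : ∀ t, HasDerivAt v₂ (v₂' t) t)
    (hxt : ∀ t, HasDerivAt xt (xt' t) t)
    (hM : ∀ t i j, HasDerivAt (fun s => M s i j) (M' t i j) t)
    (hMpd : ∀ t, (M t).PosDef)
    (hdyn1 : ∀ t, (M t).mulVec (x1'' t) + (D t).mulVec (x1' t) = F₁ t)
    (hdyn2 : ∀ t, v₂' t = -(DN t).mulVec (v₂ t) + Fnull t)
    (htank : ∀ t, xt t * xt' t =
      φ t * ((x1' t ⬝ᵥ (D t).mulVec (x1' t)) + (v₂ t ⬝ᵥ (DN t).mulVec (v₂ t))) -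
        γ t * ((1 : ℝ) / 2 * (x1' t ⬝ᵥ (M' t).mulVec (x1' t)))) :
    ∀ t, HasDerivAt
      (fun s => (1 : ℝ) / 2 * (x1' s ⬝ᵥ (M s).mulVec (x1' s)) +
        (1 : ℝ) / 2 * (xt s) ^ 2 + (1 : ℝ) / 2 * (v₂ s ⬝ᵥ v₂ s))
      (x1' t ⬝ᵥ F₁ t -
        (1 - φ t) * (x1' t ⬝ᵥ (D t).mulVec (x1' t)) -
        (1 - φ t) * (v₂ t ⬝ᵥ (DN t).mulVec (v₂ t)) +
        (1 - γ t) * ((1 : ℝ) / 2 * (x1' t ⬝ᵥ (M' t).mulVec (x1' t))) +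
        v₂ t ⬝ᵥ Fnull t) t := by
  intro t
  have hMsymm : (M t).IsSymm := (hMpd t).isHermitian
  have hH₁ := HasDerivAt.dotProduct_mulVec_self_of_isSymm (hM t) (hx1 t) hMsymm
  have hT := (hxt t).pow 2
  have hH₂ := (hv2 t).dotProduct (hv2 t)
  have hadmittance : x1' t ⬝ᵥ M t *ᵥ x1'' t = x1' t ⬝ᵥ F₁ t - x1' t ⬝ᵥ D t *ᵥ x1' t := by
    rw [← hdyn1 t, dotProduct_add]
    ring
  have hnull : v₂ t ⬝ᵥ v₂' t = -(v₂ t ⬝ᵥ DN t *ᵥ v₂ t) + v₂ t ⬝ᵥ Fnull t := by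
    rw [hdyn2 t, dotProduct_add, dotProduct_neg]
  refine (((hH₁.const_mul _).add (hT.const_mul _)).add (hH₂.const_mul _)).congr_deriv ?_
  rw [dotProduct_comm (v₂' t), hadmittance, hnull]
  linear_combination htank t

/-- Equation (25) in the proof of Proposition 2: the derivative of the total
storage function `S = H₁ + T + H₂` equals
`ẋ₁ᵀF₁ − (1−φ)P_D − (1−φ)P_N + (1−γ)P_M + v₂ᵀF_null`. -/
theorem storage_function_derivative
    (m₁ m₂ : ℕ) (hm₁ : 0 < m₁) (hm₂ : 0 < m₂)
    (x1' x1'' F₁ : ℝ → Fin m₁ → ℝ)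
    (v₂ v₂' Fnull : ℝ → Fin m₂ → ℝ)
    (xt xt' : ℝ → ℝ)
    (M M' D : ℝ → Matrix (Fin m₁) (Fin m₁) ℝ)
    (DN : ℝ → Matrix (Fin m₂) (Fin m₂) ℝ)
    (φ γ : ℝ → ℝ)
    (hx1 : ∀ t, HasDerivAt x1' (x1'' t) t)
    (hv2 : ∀ t, HasDerivAt v₂ (v₂' t) t)
    (hxt : ∀ t, HasDerivAt xt (xt' t) t)
    (hM : ∀ t i j, HasDerivAt (fun s => M s i j) (M' t i j) t)
    (hMpd : ∀ t, (M t).PosDef)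
    (hDpsd : ∀ t, (D t).PosSemidef)
    (hDNpsd : ∀ t, (DN t).PosSemidef)
    (hdyn1 : ∀ t, (M t).mulVec (x1'' t) + (D t).mulVec (x1' t) = F₁ t)
    (hdyn2 : ∀ t, v₂' t = -(DN t).mulVec (v₂ t) + Fnull t)
    (htank : ∀ t, xt t * xt' t =
      φ t * ((x1' t ⬝ᵥ (D t).mulVec (x1' t)) + (v₂ t ⬝ᵥ (DN t).mulVec (v₂ t))) -
        γ t * ((1 : ℝ) / 2 * (x1' t ⬝ᵥ (M' t).mulVec (x1' t)))) :
    ∀ t, HasDerivAt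
      (fun s => (1 : ℝ) / 2 * (x1' s ⬝ᵥ (M s).mulVec (x1' s)) +
        (1 : ℝ) / 2 * (xt s) ^ 2 + (1 : ℝ) / 2 * (v₂ s ⬝ᵥ v₂ s))
      (x1' t ⬝ᵥ F₁ t -
        (1 - φ t) * (x1' t ⬝ᵥ (D t).mulVec (x1' t)) -
        (1 - φ t) * (v₂ t ⬝ᵥ (DN t).mulVec (v₂ t)) +
        (1 - γ t) * ((1 : ℝ) / 2 * (x1' t ⬝ᵥ (M' t).mulVec (x1' t))) +
        v₂ t ⬝ᵥ Fnull t) t :=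
  storage_function_derivative_general m₁ m₂ x1' x1'' F₁ v₂ v₂' Fnull xt xt' M M' D DN φ γ hx1 hv2
    hxt hM hMpd hdyn1 hdyn2 htank
end

section
/- Under the hypotheses of Proposition 2 (with ψ ≡ 0), for every t the pointwise power inequality ẋ₁(t)ᵀF₁(t) + v₂(t)ᵀF_null(t) ≥ Ḣ₁(t) + Ṫ(t) + Ḣ₂(t) holds, where H₁(t) = ½ẋ₁(t)ᵀM(t)ẋ₁(t), T(t) = ½x_t(t)², H₂(t) = ½v₂(t)ᵀv₂(t), and Ḣ₁, Ṫ, Ḣ₂ are their derivatives. That is: if M(t)ẍ₁ + D(t)ẋ₁ = F₁ with M(t) symmetric positive definite and differentiable, D(t) symmetric positive semidefinite; v̇₂ = −D_N(t)v₂ + F_null with D_N(t) symmetric positive semidefinite; x_t·ẋ_t = φ(t)(ẋ₁ᵀDẋ₁ + v₂ᵀD_Nv₂) − γ(t)·½ẋ₁ᵀṀẋ₁; φ(t) ∈ {0,1}; and for every t either γ(t) = 1 or (γ(t) = 0 and Ṁ(t) is negative semidefinite); then ẋ₁(t)ᵀF₁(t) + v₂(t)ᵀF_null(t) ≥ Ḣ₁(t)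 + Ṫ(t) + Ḣ₂(t). -/
/-!
Differentiating the three storage functions along solutions gives
`Ḣ₁ = ẋ₁ᵀF₁ - P_D + P_M` (using `Mᵀ = M` and the admittance dynamics), `Ḣ₂ = v₂ᵀF_null - P_N`
and `Ṫ = φ (P_D + P_N) - γ P_M`. The supplied power therefore exceeds `Ḣ₁ + Ṫ + Ḣ₂` by
`(1 - φ)(P_D + P_N) - (1 - γ) P_M`, which is nonnegative: the dissipated powers are nonnegative,
and whenever `γ = 0` the passivity-violating term `P_M` is nonpositive because `Ṁ ⪯ 0`.
-/

open Matrix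

section QuadraticForms

variable {m n : Type*} [Fintype m] [Fintype n]

theorem hasDerivAt_dotProduct_mulVec {u : ℝ → m → ℝ} {w : ℝ → n → ℝ} {A : ℝ → Matrix m n ℝ}
    {u' : m → ℝ} {w' : n → ℝ} {A' : Matrix m n ℝ} {t : ℝ}
    (hu : HasDerivAt u u' t) (hw : HasDerivAt w w' t)
    (hA : ∀ i j, HasDerivAt (fun s => A s i j) (A' i j) t) :
    HasDerivAt (fun s => u s ⬝ᵥ A s *ᵥ w s)
      (u' ⬝ᵥ A t *ᵥ w t + u t ⬝ᵥ A' *ᵥ w t + u t ⬝ᵥ A t *ᵥ w') t := by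
  have hsum : HasDerivAt (fun s => ∑ i, ∑ j, u s i * (A s i j * w s j))
      (∑ i, ∑ j, (u' i * (A t i j * w t j) + u t i * (A' i j * w t j + A t i j * w' j))) t :=
    .fun_sum fun i _ => .fun_sum fun j _ =>
      (hasDerivAt_pi.mp hu i).mul ((hA i j).mul (hasDerivAt_pi.mp hw j))
  convert hsum using 1
  · funext s
    simp only [dotProduct, mulVec, Finset.mul_sum]
  · simp only [dotProduct, mulVec, Finset.mul_sum, Finset.sum_add_distrib, mul_add]
    ring

theorem hasDerivAt_half_dotProduct_mulVec_self {u : ℝ → n → ℝ} {A : ℝ → Matrix n n ℝ}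
    {u' : n → ℝ} {A' : Matrix n n ℝ} {t : ℝ} (hAt : (A t).IsHermitian)
    (hu : HasDerivAt u u' t) (hA : ∀ i j, HasDerivAt (fun s => A s i j) (A' i j) t) :
    HasDerivAt (fun s => (1 : ℝ) / 2 * (u s ⬝ᵥ A s *ᵥ u s))
      (u t ⬝ᵥ A t *ᵥ u' + (1 : ℝ) / 2 * (u t ⬝ᵥ A' *ᵥ u t)) t := by
  have hswap : u' ⬝ᵥ A t *ᵥ u t = u t ⬝ᵥ A t *ᵥ u' := by
    rw [dotProduct_mulVec, ← mulVec_transpose, ← conjTranspose_eq_transpose_of_trivial, hAt.eq,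
      dotProduct_comm]
  refine ((hasDerivAt_dotProduct_mulVec hu hu hA).const_mul ((1 : ℝ) / 2)).congr_deriv ?_
  rw [hswap]
  ring

theorem hasDerivAt_half_dotProduct_self {u : ℝ → n → ℝ} {u' : n → ℝ} {t : ℝ}
    (hu : HasDerivAt u u' t) :
    HasDerivAt (fun s => (1 : ℝ) / 2 * (u s ⬝ᵥ u s)) (u t ⬝ᵥ u') t := by
  classical
  simpa using hasDerivAt_half_dotProduct_mulVec_self (A := fun _ => (1 : Matrix n n ℝ))
    (A' := 0) isHermitian_one hu fun i j => hasDerivAt_const t _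

theorem dotProduct_mulVec_nonpos_of_posSemidef_neg {A : Matrix n n ℝ} (hA : (-A).PosSemidef)
    (x : n → ℝ) : x ⬝ᵥ A *ᵥ x ≤ 0 := by
  have := hA.dotProduct_mulVec_nonneg x
  simp only [neg_mulVec, dotProduct_neg, star_trivial] at this
  linarith

end QuadraticForms

theorem tank_power_le {P Q φ γ : ℝ} (hP : 0 ≤ P) (hφ : φ = 0 ∨ φ = 1)
    (hγ : γ = 1 ∨ (γ = 0 ∧ Q ≤ 0)) : φ * P - γ * Q ≤ P - Q := by
  rcases hφ with rfl | rfl <;> rcases hγ with rfl | ⟨rfl, hQ⟩ <;> linarith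

theorem pointwise_power_inequality_general
    (m₁ m₂ : ℕ)
    (x1' x1'' F₁ : ℝ → Fin m₁ → ℝ)
    (v₂ v₂' Fnull : ℝ → Fin m₂ → ℝ)
    (xt xt' : ℝ → ℝ)
    (M M' D : ℝ → Matrix (Fin m₁) (Fin m₁) ℝ)
    (DN : ℝ → Matrix (Fin m₂) (Fin m₂) ℝ)
    (φ γ : ℝ → ℝ)
    (hx1 : ∀ t, HasDerivAt x1' (x1'' t) t)
    (hv2 : ∀ t, HasDerivAt v₂ (v₂' t) t)
    (hxt : ∀ t, HasDerivAt xt (xt' t) t)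
    (hM : ∀ t i j, HasDerivAt (fun s => M s i j) (M' t i j) t)
    (hMpd : ∀ t, (M t).PosDef)
    (hDpsd : ∀ t, (D t).PosSemidef)
    (hDNpsd : ∀ t, (DN t).PosSemidef)
    (hdyn1 : ∀ t, (M t).mulVec (x1'' t) + (D t).mulVec (x1' t) = F₁ t)
    (hdyn2 : ∀ t, v₂' t = -(DN t).mulVec (v₂ t) + Fnull t)
    (htank : ∀ t, xt t * xt' t =
      φ t * ((x1' t ⬝ᵥ (D t).mulVec (x1' t)) + (v₂ t ⬝ᵥ (DN t).mulVec (v₂ t))) -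
        γ t * ((1 : ℝ) / 2 * (x1' t ⬝ᵥ (M' t).mulVec (x1' t))))
    (hφ : ∀ t, φ t = 0 ∨ φ t = 1)
    (hγ : ∀ t, γ t = 1 ∨ (γ t = 0 ∧ (-(M' t)).PosSemidef)) :
    ∀ t, x1' t ⬝ᵥ F₁ t + v₂ t ⬝ᵥ Fnull t ≥
      deriv (fun s => (1 : ℝ) / 2 * (x1' s ⬝ᵥ (M s).mulVec (x1' s))) t +
      deriv (fun s => (1 : ℝ) / 2 * (xt s) ^ 2) t +
      deriv (fun s => (1 : ℝ) / 2 * (v₂ s ⬝ᵥ v₂ s)) t := by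
  intro t
  have hT : deriv (fun s => (1 : ℝ) / 2 * xt s ^ 2) t = xt t * xt' t := by
    rw [(((hxt t).fun_pow 2).const_mul ((1 : ℝ) / 2)).deriv]
    ring
  rw [(hasDerivAt_half_dotProduct_mulVec_self (hMpd t).isHermitian (hx1 t) (hM t)).deriv,
    (hasDerivAt_half_dotProduct_self (hv2 t)).deriv, hT, htank t, hdyn2 t,
    eq_sub_of_add_eq (hdyn1 t)]
  have hPD : 0 ≤ x1' t ⬝ᵥ D t *ᵥ x1' t := (hDpsd t).dotProduct_mulVec_nonneg _
  have hPN : 0 ≤ v₂ t ⬝ᵥ DN t *ᵥ v₂ t := (hDNpsd t).dotProduct_mulVec_nonneg _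
  have hPM : γ t = 1 ∨ (γ t = 0 ∧ (1 : ℝ) / 2 * (x1' t ⬝ᵥ M' t *ᵥ x1' t) ≤ 0) :=
    (hγ t).imp_right fun ⟨hγ0, hM'⟩ =>
      ⟨hγ0, by linarith [dotProduct_mulVec_nonpos_of_posSemidef_neg hM' (x1' t)]⟩
  have htank_le := tank_power_le (add_nonneg hPD hPN) (hφ t) hPM
  simp only [dotProduct_sub, dotProduct_add, dotProduct_neg]
  linarith

/-- Equation (28) in the proof of Proposition 2: the pointwise power inequality
`ẋ₁ᵀF₁ + v₂ᵀF_null ≥ Ḣ₁ + Ṫ + Ḣ₂`. -/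
theorem pointwise_power_inequality
    (m₁ m₂ : ℕ) (hm₁ : 0 < m₁) (hm₂ : 0 < m₂)
    (x1' x1'' F₁ : ℝ → Fin m₁ → ℝ)
    (v₂ v₂' Fnull : ℝ → Fin m₂ → ℝ)
    (xt xt' : ℝ → ℝ)
    (M M' D : ℝ → Matrix (Fin m₁) (Fin m₁) ℝ)
    (DN : ℝ → Matrix (Fin m₂) (Fin m₂) ℝ)
    (φ γ : ℝ → ℝ)
    (hx1 : ∀ t, HasDerivAt x1' (x1'' t) t)
    (hv2 : ∀ t, HasDerivAt v₂ (v₂' t) t)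
    (hxt : ∀ t, HasDerivAt xt (xt' t) t)
    (hM : ∀ t i j, HasDerivAt (fun s => M s i j) (M' t i j) t)
    (hMpd : ∀ t, (M t).PosDef)
    (hDpsd : ∀ t, (D t).PosSemidef)
    (hDNpsd : ∀ t, (DN t).PosSemidef)
    (hdyn1 : ∀ t, (M t).mulVec (x1'' t) + (D t).mulVec (x1' t) = F₁ t)
    (hdyn2 : ∀ t, v₂' t = -(DN t).mulVec (v₂ t) + Fnull t)
    (htank : ∀ t, xt t * xt' t =
      φ t * ((x1' t ⬝ᵥ (D t).mulVec (x1' t)) + (v₂ t ⬝ᵥ (DN t).mulVec (v₂ t))) -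
        γ t * ((1 : ℝ) / 2 * (x1' t ⬝ᵥ (M' t).mulVec (x1' t))))
    (hφ : ∀ t, φ t = 0 ∨ φ t = 1)
    (hγ : ∀ t, γ t = 1 ∨ (γ t = 0 ∧ (-(M' t)).PosSemidef)) :
    ∀ t, x1' t ⬝ᵥ F₁ t + v₂ t ⬝ᵥ Fnull t ≥
      deriv (fun s => (1 : ℝ) / 2 * (x1' s ⬝ᵥ (M s).mulVec (x1' s))) t +
      deriv (fun s => (1 : ℝ) / 2 * (xt s) ^ 2) t +
      deriv (fun s => (1 : ℝ) / 2 * (v₂ s ⬝ᵥ v₂ s)) t :=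
  pointwise_power_inequality_general m₁ m₂ x1' x1'' F₁ v₂ v₂' Fnull xt xt' M M' D DN φ γ hx1 hv2 hxt
    hM hMpd hDpsd hDNpsd hdyn1 hdyn2 htank hφ hγ
end
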